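/- arXiv:2310.14395 — 2 statements merged into one kernel-verified Lean document; each statement's English description precedes it below -/
import Mathlib

section
/- In the regularised RBM construction, every pattern ξ^η = (v^η, h^η) (with h^η_α = 2δ_{αη} - 1) is a strict local minimum of the energy function: flipping any single visible or hidden spin of ξ^η strictly increases the energy (by at least 3A). -/
open Finset

/-!
The energy is affine in each single spin, so a flip changes it by twice the spin times the
local field acting on that spin. Closure under negation makes every column `∑ α, v α j` vanish,
so at the pattern the field on visible spin `j` is `4 A v^η_j`, and a visible flip costs `8A`.
The field on hidden unit `α` is `2A (v^η · v^α + λ_α - V)`: it equals `2A λ_η` for `α = η`,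
and for `α ≠ η` distinct `±1` vectors have overlap at most `V - 2`, so the field is at most
`2A (λ_α - 2)`. Hidden flips therefore cost `4A λ_η` resp. at least `4A (2 - λ_α)`, both above
`3A` since `3/4 < λ < 5/4`.
-/

/-- Energy of the regularised RBM with weights `W j α = 2 A v α j`, zero visible
biases and hidden biases `c α = 2 A (λ α - V)`. -/
noncomputable def raEnergy {V H : ℕ} (A : ℝ) (lam : Fin H → ℝ)
    (v : Fin H → Fin V → ℝ) (x : Fin V → ℝ) (h : Fin H → ℝ) : ℝ :=
  -(∑ j, ∑ α, x j * (2 * A * v α j) * h α)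
    - ∑ α, (2 * A * (lam α - (V : ℝ))) * h α

/-- Overlap `S α η = v^α · v^η`. -/
noncomputable def raOverlap {V H : ℕ} (v : Fin H → Fin V → ℝ) (α η : Fin H) : ℝ :=
  ∑ j, v α j * v η j

theorem sum_eq_zero_of_injective_of_forall_exists_neg {ι G : Type*} [Fintype ι]
    [AddCommGroup G] [IsAddTorsionFree G] {f : ι → G} (hf : Function.Injective f)
    (hneg : ∀ i, ∃ i', f i' = -f i) : ∑ i, f i = 0 := by
  choose e he using hneg
  have he_inv : Function.Involutive e := fun i => hf (by rw [he, he, neg_neg])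
  refine self_eq_neg.mp ?_
  calc ∑ i, f i = ∑ i, f (e i) := (he_inv.bijective.sum_comp f).symm
    _ = -∑ i, f i := by simp only [he, sum_neg_distrib]

theorem Fintype.sum_mul_update {ι R : Type*} [Fintype ι] [DecidableEq ι] [CommRing R]
    (g f : ι → R) (i : ι) (b : R) :
    ∑ k, g k * Function.update f i b k = ∑ k, g k * f k + g i * (b - f i) := by
  rw [Fintype.sum_eq_add_sum_compl i, Fintype.sum_eq_add_sum_compl i (fun k => g k * f k),
    Function.update_self]
  have hrest : ∑ k ∈ {i}ᶜ, g k * Function.update f i b k = ∑ k ∈ {i}ᶜ, g k * f k :=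
    Finset.sum_congr rfl fun k hk => by rw [Function.update_of_ne (by simpa using hk)]
  rw [hrest]
  ring

section SignVectors

variable {κ R : Type*} [Fintype κ] [CommRing R] [LinearOrder R] [IsStrictOrderedRing R]
  {x y : κ → R}

theorem sum_mul_self_eq_card_of_sign (hx : ∀ j, x j = 1 ∨ x j = -1) :
    ∑ j, x j * x j = Fintype.card κ := by
  have h1 (j : κ) : x j * x j = 1 := by rcases hx j with h | h <;> rw [h] <;> norm_num
  simp [h1]

theorem sum_mul_le_card_sub_two_of_sign (hx : ∀ j, x j = 1 ∨ x j = -1)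
    (hy : ∀ j, y j = 1 ∨ y j = -1) (hne : x ≠ y) :
    ∑ j, x j * y j ≤ Fintype.card κ - 2 := by
  classical
  obtain ⟨k, hk⟩ := Function.ne_iff.mp hne
  have hle (j : κ) : x j * y j ≤ 1 := by
    rcases hx j with h | h <;> rcases hy j with h' | h' <;> rw [h, h'] <;> norm_num
  have hk' : x k * y k = -1 := by
    rcases hx k with h | h <;> rcases hy k with h' | h' <;> simp_all
  calc ∑ j, x j * y j = x k * y k + ∑ j ∈ univ.erase k, x j * y j :=
        (add_sum_erase _ _ (mem_univ k)).symm
    _ ≤ -1 + ∑ j ∈ univ.erase k, (1 : R) := by rw [hk']; gcongr with j; exact hle j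
    _ = Fintype.card κ - 2 := by
      rw [sum_const, card_erase_of_mem (mem_univ k), card_univ, nsmul_one,
        Nat.cast_sub (Fintype.card_pos_iff.mpr ⟨k⟩)]
      ring

end SignVectors

section Fields

variable {V H : ℕ} (A : ℝ) (lam : Fin H → ℝ) (v : Fin H → Fin V → ℝ)

noncomputable def raVisibleField (h : Fin H → ℝ) (j : Fin V) : ℝ :=
  2 * A * ∑ α, v α j * h α

noncomputable def raHiddenField (x : Fin V → ℝ) (α : Fin H) : ℝ :=
  2 * A * (∑ j, x j * v α j + lam α - V)

theorem raEnergy_eq_visible (x : Fin V → ℝ) (h : Fin H → ℝ) :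
    raEnergy A lam v x h =
      -∑ j, raVisibleField A v h j * x j - ∑ α, 2 * A * (lam α - V) * h α := by
  simp only [raEnergy, raVisibleField, mul_sum, sum_mul]
  congr 2
  exact Finset.sum_congr rfl fun j _ => Finset.sum_congr rfl fun α _ => by ring

theorem raEnergy_eq_hidden (x : Fin V → ℝ) (h : Fin H → ℝ) :
    raEnergy A lam v x h = -∑ α, raHiddenField A lam v x α * h α := by
  rw [raEnergy, sum_comm, ← neg_add', ← sum_add_distrib]
  refine congrArg _ (Finset.sum_congr rfl fun α _ => ?_)
  rw [raHiddenField, show ∀ s : ℝ, 2 * A * (s + lam α - V) * h α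
    = s * (2 * A) * h α + 2 * A * (lam α - V) * h α from fun s => by ring, sum_mul, sum_mul]
  congr 1
  exact Finset.sum_congr rfl fun j _ => by ring

theorem raEnergy_update_visible (x : Fin V → ℝ) (h : Fin H → ℝ) (j : Fin V) (a : ℝ) :
    raEnergy A lam v (Function.update x j a) h =
      raEnergy A lam v x h + (x j - a) * raVisibleField A v h j := by
  rw [raEnergy_eq_visible, raEnergy_eq_visible, Fintype.sum_mul_update]
  ring

theorem raEnergy_update_hidden (x : Fin V → ℝ) (h : Fin H → ℝ) (α : Fin H) (b : ℝ) :
    raEnergy A lam v x (Function.update h α b) =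
      raEnergy A lam v x h + (h α - b) * raHiddenField A lam v x α := by
  rw [raEnergy_eq_hidden, raEnergy_eq_hidden, Fintype.sum_mul_update]
  ring

theorem raVisibleField_pattern (hcol : ∀ j, ∑ α, v α j = 0) (η : Fin H) (j : Fin V) :
    raVisibleField A v (fun β => if β = η then 1 else -1) j = 4 * A * v η j := by
  have h (α : Fin H) :
      v α j * (if α = η then 1 else -1) = 2 * (if α = η then v α j else 0) - v α j := by
    split_ifs <;> ring
  simp only [raVisibleField, h, sum_sub_distrib, ← mul_sum, sum_ite_eq', mem_univ, if_true, hcol]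
  ring

end Fields

theorem regularised_patterns_are_strict_local_minima
    (V H : ℕ) (A : ℝ) (hA : 0 < A) (lam : Fin H → ℝ)
    (hlam : ∀ α, 3 / 4 < lam α ∧ lam α < 5 / 4)
    (v : Fin H → Fin V → ℝ)
    (hpm : ∀ η j, v η j = 1 ∨ v η j = -1)
    (hdist : Function.Injective v)
    (hneg : ∀ η, ∃ η', ∀ j, v η' j = -(v η j))
    (η : Fin H) :
    let hpat : Fin H → ℝ := fun β => if β = η then 1 else -1
    -- every single visible-spin flip raises the energy by more than 3A
    (∀ j : Fin V,
      raEnergy A lam v (Function.update (v η) j (-(v η j))) hpat >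
        raEnergy A lam v (v η) hpat + 3 * A) ∧
    -- every single hidden-spin flip raises the energy by more than 3A
    (∀ α : Fin H,
      raEnergy A lam v (v η) (Function.update hpat α (-(hpat α))) >
        raEnergy A lam v (v η) hpat + 3 * A) := by
  intro hpat
  have hcol (j : Fin V) : ∑ α, v α j = 0 := by
    rw [← Finset.sum_apply, sum_eq_zero_of_injective_of_forall_exists_neg hdist
      fun α => (hneg α).imp fun _ h => funext h, Pi.zero_apply]
  refine ⟨fun j => ?_, fun α => ?_⟩
  · have hsq : v η j * v η j = 1 := by rcases hpm η j with h | h <;> rw [h] <;> norm_num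
    rw [raEnergy_update_visible, raVisibleField_pattern A v hcol]
    nlinarith
  · rw [raEnergy_update_hidden, raHiddenField]
    by_cases hαη : α = η
    · subst hαη
      have hself : ∑ j, v α j * v α j = V := by
        simpa using sum_mul_self_eq_card_of_sign (hpm α)
      rw [show hpat α = 1 from if_pos rfl, hself]
      nlinarith [(hlam α).1]
    · have hoverlap : ∑ j, v η j * v α j ≤ V - 2 := by
        simpa using sum_mul_le_card_sub_two_of_sign (hpm η) (hpm α) fun h => hαη (hdist h).symm
      rw [show hpat α = -1 from if_neg hαη]
      nlinarith [(hlam α).2]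
end

section
/- In the regularised RBM construction, the energy of any configuration of the form (v, -e), where -e is the all-(-1) hidden configuration and v ∈ {-1,1}^V is arbitrary, equals E_0 = -2A ∑_{α=1}^H (V - λ_α), independently of v. -/
open Finset

/- Injectivity makes negation an involution of the index set, so reindexing by it
shows that the sum equals its own negative. -/
theorem Fintype.sum_eq_zero_of_injective_of_exists_neg {ι M : Type*} [Fintype ι]
    [AddCommGroup M] [IsAddTorsionFree M] {f : ι → M} (hf : Function.Injective f)
    (hneg : ∀ i, ∃ i', f i' = -f i) : ∑ i, f i = 0 := by
  choose σ hσ using hneg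
  have hσσ : Function.Involutive σ := fun i => hf <| by rw [hσ, hσ, neg_neg]
  refine self_eq_neg.mp ?_
  calc ∑ i, f i = ∑ i, f (σ i) := (Equiv.sum_comp (hσσ.toPerm σ) f).symm
    _ = -∑ i, f i := by simp only [hσ, Finset.sum_neg_distrib]

theorem raEnergy_const_of_sum_eq_zero {V H : ℕ} (A : ℝ) (lam : Fin H → ℝ)
    {v : Fin H → Fin V → ℝ} (hv : ∑ α, v α = 0) (x : Fin V → ℝ) (c : ℝ) :
    raEnergy A lam v x (fun _ => c) = 2 * A * c * ∑ α, ((V : ℝ) - lam α) := by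
  have hcol : ∀ j, ∑ α, v α j = 0 := fun j => by
    rw [← Finset.sum_apply, hv, Pi.zero_apply]
  have hcoupling : ∀ j, ∑ α, x j * (2 * A * v α j) * c = 0 := fun j => by
    simp only [← Finset.sum_mul, ← Finset.mul_sum, hcol, mul_zero, zero_mul]
  simp only [raEnergy, hcoupling, Finset.sum_const_zero, neg_zero, zero_sub,
    Finset.mul_sum, ← Finset.sum_neg_distrib]
  exact Finset.sum_congr rfl fun α _ => by ring

theorem regularised_plateau_energy_general
    (V H : ℕ) (A : ℝ) (lam : Fin H → ℝ)
    (v : Fin H → Fin V → ℝ)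
    (hdist : Function.Injective v)
    (hneg : ∀ η, ∃ η', ∀ j, v η' j = -(v η j))
    (x : Fin V → ℝ) :
    raEnergy A lam v x (fun _ => (-1 : ℝ))
      = -2 * A * ∑ α, ((V : ℝ) - lam α) := by
  have hv : ∑ α, v α = 0 := Fintype.sum_eq_zero_of_injective_of_exists_neg hdist
    fun η => (hneg η).imp fun _ h => funext h
  rw [raEnergy_const_of_sum_eq_zero A lam hv x]
  ring

theorem regularised_plateau_energy
    (V H : ℕ) (A : ℝ) (hA : 0 < A) (lam : Fin H → ℝ)
    (v : Fin H → Fin V → ℝ)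
    (hpm : ∀ η j, v η j = 1 ∨ v η j = -1)
    (hdist : Function.Injective v)
    (hneg : ∀ η, ∃ η', ∀ j, v η' j = -(v η j))
    (x : Fin V → ℝ) (hx : ∀ j, x j = 1 ∨ x j = -1) :
    raEnergy A lam v x (fun _ => (-1 : ℝ))
      = -2 * A * ∑ α, ((V : ℝ) - lam α) :=
  regularised_plateau_energy_general V H A lam v hdist hneg x
end
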